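/- Let n be a positive integer. If 2 is a unit of Z/nZ, then the unit graph G(Z_n) has exactly (n - 1)·φ(n)/2 edges; if 2 is not a unit of Z/nZ, then G(Z_n) has exactly n·φ(n)/2 edges. -/

import Mathlib

/-- The unit graph of `ZMod m`: distinct vertices `x, y` are adjacent iff `x + y` is a unit. -/
def unitGraph (m : ℕ) : SimpleGraph (ZMod m) where
  Adj x y := x ≠ y ∧ IsUnit (x + y)
  symm := by
    constructor
    intro x y h
    exact ⟨h.1.symm, by rw [add_comm]; exact h.2⟩
  loopless := by
    constructor
    intro x h
    exact h.1 rfl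

theorem unitGraph_card_edges (n : ℕ) (hn : 0 < n) :
    (IsUnit (2 : ZMod n) →
      (unitGraph n).edgeSet.ncard = (n - 1) * Nat.totient n / 2) ∧
    (¬IsUnit (2 : ZMod n) →
      (unitGraph n).edgeSet.ncard = n * Nat.totient n / 2) := by
  haveI : NeZero n := ⟨hn.ne'⟩
  classical
  have hU : (Finset.univ.filter fun u : ZMod n => IsUnit u).card = n.totient := by
    rw [← ZMod.card_units_eq_totient n, Fintype.card]
    symm
    apply Finset.card_bij (fun (u : (ZMod n)ˣ) _ => (u : ZMod n))
    · intro u _; simp [u.isUnit]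
    · intro a _ b _ h; exact Units.ext h
    · intro b hb
      simp only [Finset.mem_filter, Finset.mem_univ, true_and] at hb
      exact ⟨hb.unit, Finset.mem_univ _, rfl⟩
  have hfilter : ∀ x : ZMod n,
      (Finset.univ.filter fun y : ZMod n => IsUnit (x + y)).card = n.totient := by
    intro x
    rw [← hU]
    apply Finset.card_bij (fun y _ => x + y)
    · intro y hy
      simp only [Finset.mem_filter, Finset.mem_univ, true_and] at hy ⊢
      exact hy
    · intro a _ b _ h; exact add_left_cancel h
    · intro b hb
      simp only [Finset.mem_filter, Finset.mem_univ, true_and] at hb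
      exact ⟨b - x, by simpa using hb, by ring⟩
  have hdegset : ∀ x : ZMod n, (unitGraph n).neighborFinset x =
      ((Finset.univ.filter fun y : ZMod n => IsUnit (x + y)).erase x) := by
    intro x; ext y
    simp only [SimpleGraph.mem_neighborFinset, Finset.mem_erase, Finset.mem_filter,
      Finset.mem_univ, true_and]
    constructor
    · rintro ⟨h1, h2⟩; exact ⟨h1.symm, h2⟩
    · rintro ⟨h1, h2⟩; exact ⟨h1.symm, h2⟩
  have hdeg : ∀ x : ZMod n,
      (unitGraph n).degree x + (if IsUnit (x + x) then 1 else 0) = n.totient := by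
    intro x
    rw [← SimpleGraph.card_neighborFinset_eq_degree, hdegset, ← hfilter x]
    by_cases h : IsUnit (x + x)
    · rw [if_pos h]
      exact Finset.card_erase_add_one (by simp [h])
    · rw [if_neg h, Finset.erase_eq_of_notMem (by simp [h]), Nat.add_zero]
  have hsum : (∑ x : ZMod n, (unitGraph n).degree x)
      + (∑ x : ZMod n, if IsUnit (x + x) then 1 else 0) = n * n.totient := by
    rw [← Finset.sum_add_distrib]
    simp only [hdeg]
    simp [ZMod.card n]
  have h2E : ∑ x : ZMod n, (unitGraph n).degree x = 2 * (unitGraph n).edgeFinset.card :=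
    SimpleGraph.sum_degrees_eq_twice_card_edges _
  have hncard : (unitGraph n).edgeSet.ncard = (unitGraph n).edgeFinset.card := by
    rw [Set.ncard_eq_toFinset_card']
    congr 1
  constructor
  · intro h2
    have hite : (∑ x : ZMod n, if IsUnit (x + x) then 1 else 0) = n.totient := by
      rw [← hU, Finset.card_filter]
      apply Finset.sum_congr rfl
      intro x _
      have hx : IsUnit (x + x) ↔ IsUnit x := by
        have : x + x = 2 * x := by ring
        rw [this]
        constructor
        · intro h; exact isUnit_of_mul_isUnit_right h
        · intro h; exact h2.mul h
      simp [hx]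
    rw [hncard]
    rw [h2E, hite] at hsum
    have hle : n.totient ≤ n * n.totient := Nat.le_mul_of_pos_left _ hn
    have : (n - 1) * n.totient = n * n.totient - 1 * n.totient := by
      rw [← Nat.sub_mul]
    omega
  · intro h2
    have hite : (∑ x : ZMod n, if IsUnit (x + x) then 1 else 0) = 0 := by
      apply Finset.sum_eq_zero
      intro x _
      rw [if_neg]
      intro h
      apply h2
      have : x + x = 2 * x := by ring
      rw [this] at h
      exact isUnit_of_mul_isUnit_left h
    rw [hncard]
    rw [h2E, hite] at hsum
    omega
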